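/- arXiv:1302.4461 — 6 statements merged into one kernel-verified Lean document; each statement's English description precedes it below -/
import Mathlib

section
/- Every associated prime of a Borel fixed monomial ideal I in the multigraded polynomial ring S is itself Borel fixed; in particular it is generated by variables and has the property that if x_{ij} belongs to it, then x_{ik} belongs to it for all k < j. -/
open MvPolynomial Pointwise

set_option linter.unusedSectionVars false

/-- Variable index set for the block-graded polynomial ring
`S = K[x_{ij} : 1 ≤ i ≤ m, 1 ≤ j ≤ n_i]`. -/
abbrev MVar (m : ℕ) (n : Fin m → ℕ) := Σ i : Fin m, Fin (n i)

/-- The ring automorphism of `S` induced by a family of matrices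
`g i ∈ GL_{n_i}(K)`, sending `x_{ij} ↦ Σ_k (g i)_{kj} x_{ik}`. -/
noncomputable def borelAut {K : Type*} [Field K] {m : ℕ} {n : Fin m → ℕ}
    (g : ∀ i : Fin m, Matrix (Fin (n i)) (Fin (n i)) K) :
    MvPolynomial (MVar m n) K →+* MvPolynomial (MVar m n) K :=
  (MvPolynomial.aeval
    (fun p : MVar m n => ∑ k, MvPolynomial.C (g p.1 k p.2) * X (⟨p.1, k⟩ : MVar m n))).toRingHom

/-- An ideal `I ⊆ S` is Borel fixed if it is fixed by every element of the product
of the Borel subgroups of upper triangular invertible matrices acting blockwise. -/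
def IsBorelFixed {K : Type*} [Field K] {m : ℕ} {n : Fin m → ℕ}
    (I : Ideal (MvPolynomial (MVar m n) K)) : Prop :=
  ∀ g : ∀ i : Fin m, Matrix (Fin (n i)) (Fin (n i)) K,
    (∀ i, (g i).BlockTriangular id) → (∀ i j, g i j j ≠ 0) →
      I.map (borelAut g) = I

/-- `I ⊆ S` is a monomial ideal if it is generated by monomials. -/
def IsMonomialIdeal {K : Type*} [Field K] {m : ℕ} {n : Fin m → ℕ}
    (I : Ideal (MvPolynomial (MVar m n) K)) : Prop :=
  ∃ T : Set (MVar m n →₀ ℕ), I = Ideal.span ((fun d => (monomial d (1 : K))) '' T)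


open MvPolynomial

section Weight
variable {σ : Type*} [Fintype σ]

lemma digits_inj (M : ℕ) : ∀ (N : ℕ) (b c : Fin N → ℕ), (∀ i, b i < M) → (∀ i, c i < M) →
    (∑ i, b i * M ^ (i : ℕ)) = (∑ i, c i * M ^ (i : ℕ)) → b = c := by
  intro N
  induction N with
  | zero => intro b c _ _ _; funext i; exact absurd i.2 (Nat.not_lt_zero _)
  | succ N ih =>
    intro b c hb hc h
    have hM : 0 < M := Nat.pos_of_ne_zero (by rintro rfl; exact Nat.not_lt_zero _ (hb 0))
    have expand : ∀ (b : Fin (N+1) → ℕ),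
        (∑ i, b i * M ^ (i : ℕ)) = b 0 + (∑ i : Fin N, b i.succ * M ^ (i : ℕ)) * M := by
      intro b
      rw [Fin.sum_univ_succ, Finset.sum_mul]
      simp only [Fin.val_zero, pow_zero, mul_one]
      congr 1
      apply Finset.sum_congr rfl; intro i _
      simp [Fin.val_succ, pow_succ]; ring
    rw [expand b, expand c] at h
    have h0 : b 0 = c 0 := by
      have := congrArg (· % M) h
      simpa [Nat.add_mul_mod_self_right, Nat.mod_eq_of_lt (hb 0), Nat.mod_eq_of_lt (hc 0)]
        using this
    have h1 : (∑ i : Fin N, b i.succ * M ^ (i : ℕ)) = ∑ i : Fin N, c i.succ * M ^ (i : ℕ) := by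
      rw [h0] at h
      have := Nat.add_left_cancel h
      exact Nat.eq_of_mul_eq_mul_right hM this
    have := ih (fun i => b i.succ) (fun i => c i.succ) (fun i => hb _) (fun i => hc _) h1
    funext i
    refine Fin.cases ?_ ?_ i
    · exact h0
    · intro j; exact congrFun this j

/-- For a finite set `A` of exponent vectors there is a weight function whose induced
additive weight is injective on `A`. -/
lemma exists_weight (A : Finset (σ →₀ ℕ)) : ∃ w : σ → ℕ,
    ∀ μ ∈ A, ∀ ν ∈ A, (μ.sum fun v k => k * w v) = (ν.sum fun v k => k * w v) → μ = ν := by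
  classical
  set M : ℕ := 1 + A.sup (fun μ => μ.sum fun _ k => k) with hM
  have hlt : ∀ μ ∈ A, ∀ v, μ v < M := by
    intro μ hμ v
    have h1 : μ v ≤ μ.sum fun _ k => k := by
      by_cases hv : v ∈ μ.support
      · exact Finset.single_le_sum (fun _ _ => Nat.zero_le _) hv
      · simp [Finsupp.notMem_support_iff.mp hv]
    have h2 : (μ.sum fun _ k => k) ≤ A.sup (fun μ => μ.sum fun _ k => k) :=
      Finset.le_sup (f := fun μ => μ.sum fun _ k => k) hμ
    omega
  obtain ⟨e⟩ := Fintype.truncEquivFin σ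
  refine ⟨fun v => M ^ ((e v : ℕ)), ?_⟩
  intro μ hμ ν hν h
  have key : ∀ ρ : σ →₀ ℕ, (ρ.sum fun v k => k * M ^ ((e v : ℕ)))
      = ∑ i : Fin (Fintype.card σ), ρ (e.symm i) * M ^ ((i : ℕ)) := by
    intro ρ
    rw [Finsupp.sum_fintype _ _ (fun v => by simp)]
    exact Fintype.sum_equiv e _ _ (fun v => by simp)
  rw [key, key] at h
  have := digits_inj M (Fintype.card σ) _ _ (fun i => hlt μ hμ _) (fun i => hlt ν hν _) h
  ext v
  have := congrFun this (e v)
  simpa using this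
end Weight

section MonIdeal
variable {K : Type*} [Field K] {σ : Type*} [Fintype σ] [DecidableEq σ]

/-- Membership in a monomial ideal is detected on monomials of the support. -/
lemma monIdeal_mem_iff {I : Ideal (MvPolynomial σ K)}
    (hmon : ∃ T : Set (σ →₀ ℕ), I = Ideal.span ((fun d => (monomial d (1 : K))) '' T))
    (q : MvPolynomial σ K) :
    q ∈ I ↔ ∀ δ ∈ q.support, (monomial δ (1 : K)) ∈ I := by
  obtain ⟨T, rfl⟩ := hmon
  rw [mem_ideal_span_monomial_image]
  refine forall₂_congr fun δ hδ => ?_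
  rw [mem_ideal_span_monomial_image]
  simp [support_monomial]

lemma monomial_mem_iff {I : Ideal (MvPolynomial σ K)} {δ : σ →₀ ℕ} {c : K} (hc : c ≠ 0) :
    monomial δ c ∈ I ↔ monomial δ (1 : K) ∈ I := by
  constructor
  · intro h
    have := I.mul_mem_left (C c⁻¹) h
    rwa [C_mul_monomial, inv_mul_cancel₀ hc] at this
  · intro h
    have := I.mul_mem_left (C c) h
    rwa [C_mul_monomial, mul_one] at this

/-- Key lemma (Bruns–Herzog 1.5.6 style): if `I` is a monomial ideal and `P = I : (f)`
is prime, then every monomial term of every element of `P` lies in `P`. -/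
lemma colon_prime_terms {I P : Ideal (MvPolynomial σ K)}
    (hmon : ∃ T : Set (σ →₀ ℕ), I = Ideal.span ((fun d => (monomial d (1 : K))) '' T))
    (hP : P.IsPrime) (f : MvPolynomial σ K)
    (hPf : P = I.colon (Ideal.span {f})) :
    ∀ p ∈ P, ∀ δ ∈ p.support, monomial δ (p.coeff δ) ∈ P := by
  classical
  have htm := monIdeal_mem_iff hmon
  -- the set of witnesses
  set W : Set (MvPolynomial σ K) :=
    {g | I.colon (Ideal.span {g}) = P ∧ ∀ δ ∈ g.support, monomial δ (1 : K) ∉ I} with hW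
  -- reduction of a polynomial modulo its terms lying in I
  have reduce : ∀ q : MvPolynomial σ K, ∃ q' : MvPolynomial σ K,
      I.colon (Ideal.span {q'}) = I.colon (Ideal.span {q}) ∧
      (∀ δ ∈ q'.support, monomial δ (1 : K) ∉ I) ∧
      q'.support ⊆ q.support.filter (fun δ => monomial δ (1 : K) ∉ I) := by
    intro q
    set qI : MvPolynomial σ K :=
      ∑ δ ∈ q.support.filter (fun δ => monomial δ (1 : K) ∈ I), monomial δ (q.coeff δ) with hqI
    have hqImem : qI ∈ I := by
      refine Ideal.sum_mem _ fun δ hδ => ?_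
      have := (Finset.mem_filter.mp hδ).2
      exact (monomial_mem_iff (mem_support_iff.mp (Finset.mem_filter.mp hδ).1)).mpr this
    have hcoeff : ∀ δ, (q - qI).coeff δ =
        if monomial δ (1 : K) ∈ I then 0 else q.coeff δ := by
      intro δ
      have : qI.coeff δ = if δ ∈ q.support.filter (fun δ => monomial δ (1 : K) ∈ I)
          then q.coeff δ else 0 := by
        rw [hqI, coeff_sum]
        simp only [coeff_monomial]
        rw [Finset.sum_ite_eq' (q.support.filter fun δ => monomial δ (1:K) ∈ I) δ
          (fun δ' => q.coeff δ')]
      rw [coeff_sub, this]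
      by_cases h1 : monomial δ (1 : K) ∈ I
      · by_cases h2 : δ ∈ q.support
        · rw [if_pos (Finset.mem_filter.mpr ⟨h2, h1⟩), if_pos h1, sub_self]
        · have hnot : δ ∉ q.support.filter (fun δ => monomial δ (1:K) ∈ I) :=
            fun hc => h2 (Finset.mem_filter.mp hc).1
          rw [if_neg hnot, if_pos h1, notMem_support_iff.mp h2, sub_zero]
      · have hnot : δ ∉ q.support.filter (fun δ => monomial δ (1:K) ∈ I) :=
          fun hc => h1 (Finset.mem_filter.mp hc).2
        rw [if_neg hnot, if_neg h1, sub_zero]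
    refine ⟨q - qI, ?_, ?_, ?_⟩
    · ext r
      rw [Ideal.mem_colon_span_singleton, Ideal.mem_colon_span_singleton, mul_sub]
      constructor
      · intro h; have := I.add_mem h (I.mul_mem_left r hqImem); simpa using this
      · intro h; exact I.sub_mem h (I.mul_mem_left r hqImem)
    · intro δ hδ
      have := mem_support_iff.mp hδ
      rw [hcoeff δ] at this
      by_cases h : monomial δ (1:K) ∈ I
      · simp [h] at this
      · exact h
    · intro δ hδ
      have h0 := mem_support_iff.mp hδ
      rw [hcoeff δ] at h0
      by_cases h : monomial δ (1:K) ∈ I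
      · simp [h] at h0
      · simp only [h, if_false] at h0
        exact Finset.mem_filter.mpr ⟨mem_support_iff.mpr h0, h⟩
  -- W is nonempty
  have hWne : ∃ g, g ∈ W := by
    obtain ⟨f', h1, h2, _⟩ := reduce f
    exact ⟨f', by rw [hW]; exact ⟨h1.trans hPf.symm, h2⟩⟩
  -- choose a witness of minimal support cardinality
  set cardW : Set ℕ := {k | ∃ g ∈ W, g.support.card = k} with hcardW
  have hcardWne : cardW.Nonempty := by
    obtain ⟨g, hg⟩ := hWne; exact ⟨g.support.card, g, hg, rfl⟩
  obtain ⟨g, hgW, hgcard⟩ : ∃ g ∈ W, g.support.card = sInf cardW := Nat.sInf_mem hcardWne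
  have hgmin : ∀ g' ∈ W, g.support.card ≤ g'.support.card := by
    intro g' hg'
    rw [hgcard]
    exact Nat.sInf_le ⟨g', hg', rfl⟩
  have hPg : I.colon (Ideal.span {g}) = P := hgW.1
  have hg0 : g ≠ 0 := by
    rintro rfl
    refine hP.ne_top ?_
    rw [← hPg, Ideal.eq_top_iff_one, Ideal.mem_colon_span_singleton, mul_zero]
    exact I.zero_mem
  -- main step: the top term of any nonzero element of P lies in P
  have TOP : ∀ p ∈ P, p ≠ 0 → ∃ δ ∈ p.support, monomial δ (p.coeff δ) ∈ P := by
    intro p hp hp0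
    obtain ⟨w, hw⟩ := exists_weight (p.support ∪ g.support)
    set Wt : (σ →₀ ℕ) → ℕ := fun ρ => ρ.sum fun v k => k * w v with hWt
    have hWtadd : ∀ μ ν, Wt (μ + ν) = Wt μ + Wt ν := by
      intro μ ν
      exact Finsupp.sum_add_index' (fun v => by simp) (fun v k l => by rw [add_mul])
    obtain ⟨μs, hμs, hμmax⟩ := Finset.exists_max_image p.support Wt
      (support_nonempty.mpr hp0)
    obtain ⟨νs, hνs, hνmax⟩ := Finset.exists_max_image g.support Wt
      (support_nonempty.mpr hg0)
    have hpg : p * g ∈ I := by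
      rw [← Ideal.mem_colon_span_singleton, hPg]; exact hp
    -- the coefficient at the top degree is the product of top coefficients
    have topcoeff : ∀ p' : MvPolynomial σ K, p'.support ⊆ p.support → μs ∈ p'.support →
        (p' * g).coeff (μs + νs) = p'.coeff μs * g.coeff νs := by
      intro p' hsub hμs'
      rw [coeff_mul]
      refine Finset.sum_eq_single_of_mem (μs, νs) (Finset.HasAntidiagonal.mem_antidiagonal.mpr rfl) ?_
      rintro ⟨a, b⟩ hab hne
      have hab' : a + b = μs + νs := Finset.HasAntidiagonal.mem_antidiagonal.mp hab
      by_contra hc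
      have ha : a ∈ p'.support := by
        rw [mem_support_iff]; intro h; exact hc (by rw [h, zero_mul])
      have hb : b ∈ g.support := by
        rw [mem_support_iff]; intro h; exact hc (by rw [h, mul_zero])
      have ha' := hsub ha
      have h1 : Wt a ≤ Wt μs := hμmax a ha'
      have h2 : Wt b ≤ Wt νs := hνmax b hb
      have h3 : Wt a + Wt b = Wt μs + Wt νs := by
        rw [← hWtadd, ← hWtadd, hab']
      have ha2 : Wt a = Wt μs := by omega
      have hb2 : Wt b = Wt νs := by omega
      have haeq : a = μs := hw a (Finset.mem_union_left _ ha') μs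
        (Finset.mem_union_left _ hμs) ha2
      have hbeq : b = νs := hw b (Finset.mem_union_right _ hb) νs
        (Finset.mem_union_right _ hνs) hb2
      exact hne (by rw [haeq, hbeq])
    have hcμ : p.coeff μs ≠ 0 := mem_support_iff.mp hμs
    have hcν : g.coeff νs ≠ 0 := mem_support_iff.mp hνs
    have htop : monomial (μs + νs) (1 : K) ∈ I := by
      refine (htm (p * g)).mp hpg (μs + νs) ?_
      rw [mem_support_iff, topcoeff p (le_refl _) hμs]
      exact mul_ne_zero hcμ hcν
    set ts : MvPolynomial σ K := monomial μs (p.coeff μs) with hts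
    refine ⟨μs, hμs, ?_⟩
    by_cases hcase : ts * g ∈ I
    · rw [← hPg]
      exact Ideal.mem_colon_span_singleton.mpr hcase
    · -- the colon ideal of t* g strictly contains P
      set J : Ideal (MvPolynomial σ K) := I.colon (Ideal.span {ts * g}) with hJ
      have hPJ : P ≤ J := by
        intro b hb
        rw [hJ, Ideal.mem_colon_span_singleton]
        have : b * g ∈ I := by rw [← Ideal.mem_colon_span_singleton, hPg]; exact hb
        have : ts * (b * g) ∈ I := I.mul_mem_left _ this
        rwa [show b * (ts * g) = ts * (b * g) by ring]
      have hJP : J ≠ P := by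
        intro hJPeq
        -- build a smaller witness
        obtain ⟨g'', h1, h2, h3⟩ := reduce (ts * g)
        have hg''W : g'' ∈ W := by rw [hW]; exact ⟨by rw [h1, ← hJ, hJPeq], h2⟩
        -- support of ts * g
        have hsub : (ts * g).support ⊆ {μs} + g.support := by
          refine (support_mul ts g).trans ?_
          apply Finset.add_subset_add_right
          rw [hts]
          exact support_monomial_subset
        have hcard1 : ({μs} + g.support).card = g.support.card :=
          Finset.card_singleton_add _ _
        have htopmem : μs + νs ∈ (ts * g).support := by
          rw [mem_support_iff]
          have hsub2 : ts.support ⊆ p.support := by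
            rw [hts]
            intro x hx
            have := support_monomial_subset hx
            simp only [Finset.mem_singleton] at this
            subst this; exact hμs
          have hμsts : μs ∈ ts.support := by
            rw [hts, mem_support_iff, coeff_monomial, if_pos rfl]; exact hcμ
          rw [topcoeff ts hsub2 hμsts, hts, coeff_monomial, if_pos rfl]
          exact mul_ne_zero hcμ hcν
        have hg''sub : g''.support ⊆ ((ts * g).support).erase (μs + νs) := by
          intro δ hδ
          have hδ' := h3 hδ
          rw [Finset.mem_filter] at hδ'
          refine Finset.mem_erase.mpr ⟨?_, hδ'.1⟩
          rintro rfl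
          exact hδ'.2 htop
        have hcard : g''.support.card < g.support.card := by
          have c1 : g''.support.card ≤ (((ts * g).support).erase (μs + νs)).card :=
            Finset.card_le_card hg''sub
          have c2 : (((ts * g).support).erase (μs + νs)).card = (ts * g).support.card - 1 :=
            Finset.card_erase_of_mem htopmem
          have c3 : (ts * g).support.card ≤ ({μs} + g.support).card :=
            Finset.card_le_card hsub
          have c4 : 0 < (ts * g).support.card := Finset.card_pos.mpr ⟨_, htopmem⟩
          rw [hcard1] at c3
          omega
        exact absurd (hgmin g'' hg''W) (by omega)
      obtain ⟨b, hbJ, hbP⟩ : ∃ b ∈ J, b ∉ P := by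
        by_contra hcon
        push_neg at hcon
        exact hJP (le_antisymm hcon hPJ)
      have h1 : b * (ts * g) ∈ I := Ideal.mem_colon_span_singleton.mp hbJ
      have h2 : (b * ts) * g ∈ I := by rwa [mul_assoc]
      have h3 : b * ts ∈ P := by
        rw [← hPg]; exact Ideal.mem_colon_span_singleton.mpr h2
      rcases hP.mem_or_mem h3 with h | h
      · exact absurd h hbP
      · exact h
  -- conclude: all terms, by strong induction on the support size
  have MAIN : ∀ N : ℕ, ∀ p ∈ P, p.support.card ≤ N →
      ∀ δ ∈ p.support, monomial δ (p.coeff δ) ∈ P := by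
    intro N
    induction N with
    | zero =>
      intro p _ hcard δ hδ
      rw [Nat.le_zero, Finset.card_eq_zero] at hcard
      rw [hcard] at hδ
      exact absurd hδ (Finset.notMem_empty δ)
    | succ N ih =>
      intro p hp hcard δ hδ
      have hp0 : p ≠ 0 := by
        intro h; rw [h] at hδ; simp at hδ
      obtain ⟨δ₀, hδ₀, ht₀⟩ := TOP p hp hp0
      by_cases heq : δ = δ₀
      · subst heq; exact ht₀
      · set p' : MvPolynomial σ K := p - monomial δ₀ (p.coeff δ₀) with hp'
        have hp'P : p' ∈ P := P.sub_mem hp ht₀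
        have hc' : ∀ δ', p'.coeff δ' = if δ' = δ₀ then 0 else p.coeff δ' := by
          intro δ'
          rw [hp', coeff_sub, coeff_monomial]
          by_cases h : δ' = δ₀
          · subst h; simp
          · simp [h, Ne.symm h]
        have hsupp' : p'.support = p.support.erase δ₀ := by
          ext δ'
          rw [mem_support_iff, hc', Finset.mem_erase, mem_support_iff]
          by_cases h : δ' = δ₀ <;> simp [h]
        have hcard' : p'.support.card ≤ N := by
          rw [hsupp', Finset.card_erase_of_mem hδ₀]
          omega
        have hδ' : δ ∈ p'.support := by
          rw [hsupp']; exact Finset.mem_erase.mpr ⟨heq, hδ⟩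
        have := ih p' hp'P hcard' δ hδ'
        rwa [hc', if_neg heq] at this
  intro p hp δ hδ
  exact MAIN p.support.card p hp (le_refl _) δ hδ
end MonIdeal

section Borel
variable {K : Type*} [Field K] {m : ℕ} {n : Fin m → ℕ}

lemma borelAut_C (g : ∀ i : Fin m, Matrix (Fin (n i)) (Fin (n i)) K) (a : K) :
    borelAut g (C a) = C a := by
  simp [borelAut, algHom_C]

lemma borelAut_X (g : ∀ i : Fin m, Matrix (Fin (n i)) (Fin (n i)) K) (v : MVar m n) :
    borelAut g (X v) = ∑ k, C (g v.1 k v.2) * X (⟨v.1, k⟩ : MVar m n) := by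
  simp [borelAut]

lemma borelAut_comp (g h : ∀ i : Fin m, Matrix (Fin (n i)) (Fin (n i)) K) :
    (borelAut g).comp (borelAut h) = borelAut (fun i => g i * h i) := by
  apply ringHom_ext
  · intro a
    simp [borelAut_C]
  · rintro ⟨i, j⟩
    rw [RingHom.comp_apply, borelAut_X, borelAut_X, map_sum]
    have hterm : ∀ k, borelAut g (C (h i k j) * X (⟨i, k⟩ : MVar m n))
        = ∑ l, C (h i k j) * (C (g i l k) * X (⟨i, l⟩ : MVar m n)) := by
      intro k
      rw [map_mul, borelAut_C, borelAut_X, Finset.mul_sum]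
    simp only [hterm]
    rw [Finset.sum_comm]
    refine Finset.sum_congr rfl fun l _ => ?_
    rw [Matrix.mul_apply, map_sum, Finset.sum_mul]
    refine Finset.sum_congr rfl fun k _ => ?_
    rw [C_mul]
    ring

lemma borelAut_one :
    borelAut (K := K) (fun i : Fin m => (1 : Matrix (Fin (n i)) (Fin (n i)) K))
      = RingHom.id _ := by
  apply ringHom_ext
  · intro a; simp [borelAut_C]
  · rintro ⟨i, j⟩
    rw [borelAut_X, RingHom.id_apply]
    rw [Finset.sum_congr rfl (fun k _ => by rw [Matrix.one_apply])]
    simp [Finset.sum_ite_eq' Finset.univ j (fun k => C (1:K) * X (⟨i,k⟩ : MVar m n))]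

variable {g h : ∀ i : Fin m, Matrix (Fin (n i)) (Fin (n i)) K}

lemma borelAut_leftInv (hgh : ∀ i, g i * h i = 1) (x : MvPolynomial (MVar m n) K) :
    borelAut g (borelAut h x) = x := by
  have h1 : (borelAut g).comp (borelAut h) = RingHom.id _ := by
    rw [borelAut_comp]
    have : (fun i => g i * h i) = fun i : Fin m => (1 : Matrix (Fin (n i)) (Fin (n i)) K) :=
      funext hgh
    rw [this, borelAut_one]
  exact RingHom.congr_fun h1 x

lemma borelAut_surj (hgh : ∀ i, g i * h i = 1) : Function.Surjective (borelAut g) :=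
  fun y => ⟨borelAut h y, borelAut_leftInv hgh y⟩

lemma borelAut_inj (hhg : ∀ i, h i * g i = 1) : Function.Injective (borelAut g) := by
  intro a b hab
  have := congrArg (borelAut h) hab
  rwa [borelAut_leftInv hhg, borelAut_leftInv hhg] at this

lemma borelAut_map_map (hgh : ∀ i, g i * h i = 1) (J : Ideal (MvPolynomial (MVar m n) K)) :
    (J.map (borelAut h)).map (borelAut g) = J := by
  rw [Ideal.map_map, borelAut_comp]
  have : (fun i => g i * h i) = fun i : Fin m => (1 : Matrix (Fin (n i)) (Fin (n i)) K) :=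
    funext hgh
  rw [this, borelAut_one, Ideal.map_id]

lemma borelAut_map_colon (hgh : ∀ i, g i * h i = 1) (hhg : ∀ i, h i * g i = 1)
    (I : Ideal (MvPolynomial (MVar m n) K)) (f : MvPolynomial (MVar m n) K) :
    (I.colon (Ideal.span {f})).map (borelAut g)
      = (I.map (borelAut g)).colon (Ideal.span {borelAut g f}) := by
  apply le_antisymm
  · rw [Ideal.map_le_iff_le_comap]
    intro r hr
    rw [Ideal.mem_comap, Ideal.mem_colon_span_singleton, ← map_mul]
    exact Ideal.mem_map_of_mem _ (Ideal.mem_colon_span_singleton.mp hr)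
  · intro y hy
    obtain ⟨r, rfl⟩ := borelAut_surj hgh y
    have h1 : borelAut g (r * f) ∈ I.map (borelAut g) := by
      rw [map_mul]; exact Ideal.mem_colon_span_singleton.mp hy
    rw [Ideal.mem_map_iff_of_surjective _ (borelAut_surj hgh)] at h1
    obtain ⟨a, haI, ha⟩ := h1
    have : a = r * f := borelAut_inj hhg ha
    subst this
    exact Ideal.mem_map_of_mem _ (Ideal.mem_colon_span_singleton.mpr haI)

lemma borelAut_map_isPrime (hgh : ∀ i, g i * h i = 1) (hhg : ∀ i, h i * g i = 1)
    {P : Ideal (MvPolynomial (MVar m n) K)} (hP : P.IsPrime) :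
    (P.map (borelAut g)).IsPrime := by
  haveI := hP
  refine Ideal.map_isPrime_of_surjective (borelAut_surj hgh) ?_
  have : RingHom.ker (borelAut g) = ⊥ :=
    (RingHom.injective_iff_ker_eq_bot (borelAut g)).mp (borelAut_inj hhg)
  rw [this]
  exact bot_le

end Borel

section MatrixFacts
variable {K : Type*} [Field K]

lemma matrix_inv_facts {N : ℕ} (A : Matrix (Fin N) (Fin N) K)
    (hA : A.BlockTriangular id) (hd : ∀ j, A j j ≠ 0) :
    A * A⁻¹ = 1 ∧ A⁻¹ * A = 1 ∧ A⁻¹.BlockTriangular id ∧ ∀ j, A⁻¹ j j ≠ 0 := by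
  have hdet : A.det = ∏ i, A i i := Matrix.det_of_upperTriangular hA
  have hu : IsUnit A.det := by
    rw [hdet, isUnit_iff_ne_zero]
    exact Finset.prod_ne_zero_iff.mpr fun i _ => hd i
  have h1 := A.mul_nonsing_inv hu
  have h2 := A.nonsing_inv_mul hu
  haveI : Invertible A := A.invertibleOfIsUnitDet hu
  have h3 : A⁻¹.BlockTriangular id := Matrix.blockTriangular_inv_of_blockTriangular hA
  have hdet' : A⁻¹.det = ∏ i, A⁻¹ i i := Matrix.det_of_upperTriangular h3
  have hdne : A⁻¹.det ≠ 0 := by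
    intro hc
    have := congrArg Matrix.det h2
    rw [Matrix.det_mul, hc, zero_mul, Matrix.det_one] at this
    exact zero_ne_one this
  refine ⟨h1, h2, h3, fun j => ?_⟩
  rw [hdet'] at hdne
  exact Finset.prod_ne_zero_iff.mp hdne j (Finset.mem_univ j)

end MatrixFacts


section Main
variable {K : Type*} [Field K] {m : ℕ} {n : Fin m → ℕ}

/-- If `I` is a monomial ideal and `P = I : (f)` is prime, then `P` is generated by the
variables it contains. -/
lemma colon_prime_span_X {I P : Ideal (MvPolynomial (MVar m n) K)}
    (hmon : ∃ T : Set (MVar m n →₀ ℕ), I = Ideal.span ((fun d => (monomial d (1 : K))) '' T))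
    (hP : P.IsPrime) (f : MvPolynomial (MVar m n) K)
    (hPf : P = I.colon (Ideal.span {f})) :
    P = Ideal.span (X '' {v : MVar m n | X v ∈ P}) := by
  classical
  apply le_antisymm
  · intro p hp
    rw [mem_ideal_span_X_image]
    intro μ hμ
    have hterm := colon_prime_terms hmon hP f hPf p hp μ hμ
    have hc : p.coeff μ ≠ 0 := mem_support_iff.mp hμ
    have h1 : monomial μ (1 : K) ∈ P := (monomial_mem_iff hc).mp hterm
    have hprod : (μ.prod fun v e => (X v : MvPolynomial (MVar m n) K) ^ e) ∈ P := by
      have he : monomial μ (1 : K)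
          = μ.prod fun v e => (X v : MvPolynomial (MVar m n) K) ^ e := by
        rw [monomial_eq, C_1, one_mul]
      rwa [he] at h1
    rw [Finsupp.prod] at hprod
    haveI := hP
    obtain ⟨v, hvs, hv⟩ := Ideal.IsPrime.prod_mem_iff.mp hprod
    exact ⟨v, hP.mem_of_pow_mem _ hv, Finsupp.mem_support_iff.mp hvs⟩
  · rw [Ideal.span_le]
    rintro y ⟨v, hv, rfl⟩
    exact hv

/-- Part (3): downward closure of the variables of `P` within each block. -/
lemma part3main {I P : Ideal (MvPolynomial (MVar m n) K)}
    (hmon : ∃ T : Set (MVar m n →₀ ℕ), I = Ideal.span ((fun d => (monomial d (1 : K))) '' T))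
    (hBorel : IsBorelFixed I) (hP : P.IsPrime)
    (f : MvPolynomial (MVar m n) K) (hPf : P = I.colon (Ideal.span {f})) :
    ∀ (i : Fin m) (j k : Fin (n i)), k < j →
      (X (⟨i, j⟩ : MVar m n) : MvPolynomial (MVar m n) K) ∈ P →
      (X (⟨i, k⟩ : MVar m n) : MvPolynomial (MVar m n) K) ∈ P := by
  classical
  intro i j k hkj hXj
  set g : ∀ i : Fin m, Matrix (Fin (n i)) (Fin (n i)) K :=
    fun i => Matrix.of fun a b => if a ≤ b then (1 : K) else 0 with hgdef
  have hgBT : ∀ i, (g i).BlockTriangular id := by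
    intro i a b hab
    have hab' : b < a := hab
    show (if a ≤ b then (1:K) else 0) = 0
    exact if_neg (not_le.mpr hab')
  have hgd : ∀ i j, g i j j ≠ 0 := by
    intro i j
    show (if j ≤ j then (1:K) else 0) ≠ 0
    rw [if_pos le_rfl]
    exact one_ne_zero
  set h : ∀ i : Fin m, Matrix (Fin (n i)) (Fin (n i)) K := fun i => (g i)⁻¹ with hhdef
  have hfacts := fun i => matrix_inv_facts (g i) (hgBT i) (fun j => hgd i j)
  have hgh : ∀ i, g i * h i = 1 := fun i => (hfacts i).1
  have hhg : ∀ i, h i * g i = 1 := fun i => (hfacts i).2.1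
  have hhBT : ∀ i, (h i).BlockTriangular id := fun i => (hfacts i).2.2.1
  have hhd : ∀ i j, h i j j ≠ 0 := fun i j => (hfacts i).2.2.2 j
  have hI : I.map (borelAut g) = I := hBorel g hgBT hgd
  set Q : Ideal (MvPolynomial (MVar m n) K) := I.colon (Ideal.span {borelAut g f}) with hQdef
  have hQ : P.map (borelAut g) = Q := by
    rw [hPf, borelAut_map_colon hgh hhg, hI]
  have hQprime : Q.IsPrime := hQ ▸ borelAut_map_isPrime hgh hhg hP
  have hVQ : Q = Ideal.span (X '' {v : MVar m n | X v ∈ Q}) :=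
    colon_prime_span_X hmon hQprime _ rfl
  -- Step 1 : every variable `X⟨i,l⟩` with `l ≤ j` lies in `Q`.
  have step1 : ∀ l : Fin (n i), l ≤ j → (X (⟨i, l⟩ : MVar m n) : MvPolynomial (MVar m n) K) ∈ Q := by
    intro l hlj
    have hL : borelAut g (X (⟨i, j⟩ : MVar m n)) ∈ Q := by
      rw [← hQ]; exact Ideal.mem_map_of_mem _ hXj
    rw [borelAut_X] at hL
    rw [hVQ, mem_ideal_span_X_image] at hL
    have hsupp : (Finsupp.single (⟨i, l⟩ : MVar m n) 1) ∈
        (∑ k', C (g i k' j) * X (⟨i, k'⟩ : MVar m n)).support := by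
      rw [mem_support_iff]
      have hco : ∀ k' : Fin (n i), MvPolynomial.coeff (Finsupp.single (⟨i, l⟩ : MVar m n) 1)
          (C (g i k' j) * X (⟨i, k'⟩ : MVar m n)) = if k' = l then g i k' j else 0 := by
        intro k'
        rw [coeff_C_mul, coeff_X']
        by_cases hkl : k' = l
        · subst hkl; rw [if_pos rfl, if_pos rfl, mul_one]
        · have hne : ¬ (Finsupp.single (⟨i, k'⟩ : MVar m n) 1
              = Finsupp.single (⟨i, l⟩ : MVar m n) (1:ℕ)) := by
            intro hc
            rcases (Finsupp.single_eq_single_iff _ _ _ _).mp hc with ⟨h1, _⟩ | ⟨h1, _⟩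
            · exact hkl (eq_of_heq (Sigma.mk.inj_iff.mp h1).2)
            · exact one_ne_zero h1
          rw [if_neg hne, if_neg hkl, mul_zero]
      rw [coeff_sum]
      simp only [hco]
      rw [Finset.sum_ite_eq' Finset.univ l (fun k' => g i k' j), if_pos (Finset.mem_univ l)]
      show (if l ≤ j then (1:K) else 0) ≠ 0
      rw [if_pos hlj]
      exact one_ne_zero
    obtain ⟨v, hvQ, hvne⟩ := hL _ hsupp
    have hveq : v = (⟨i, l⟩ : MVar m n) := by
      by_contra hne
      apply hvne
      rw [Finsupp.single_apply, if_neg (fun hc => hne hc.symm)]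
    subst hveq
    exact hvQ
  -- Step 2 : pull back to `P` by induction.
  have key : ∀ l : Fin (n i), l ≤ j →
      (∀ l' : Fin (n i), l' < l → (X (⟨i, l'⟩ : MVar m n) : MvPolynomial (MVar m n) K) ∈ P) →
      (X (⟨i, l⟩ : MVar m n) : MvPolynomial (MVar m n) K) ∈ P := by
    intro l hlj ihl
    have h1 : borelAut h (X (⟨i, l⟩ : MVar m n)) ∈ P := by
      have h2 := step1 l hlj
      rw [← hQ] at h2
      have h3 := Ideal.mem_map_of_mem (borelAut h) h2
      rwa [borelAut_map_map (g := h) (h := g) hhg P] at h3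
    rw [borelAut_X] at h1
    have hsplit : (∑ l' ∈ Finset.univ.erase l, C (h i l' l) * X (⟨i, l'⟩ : MVar m n))
        + C (h i l l) * X (⟨i, l⟩ : MVar m n)
        = ∑ l', C (h i l' l) * X (⟨i, l'⟩ : MVar m n) :=
      Finset.sum_erase_add _ _ (Finset.mem_univ l)
    have hrest : (∑ l' ∈ Finset.univ.erase l, C (h i l' l) * X (⟨i, l'⟩ : MVar m n)) ∈ P := by
      refine Ideal.sum_mem _ fun l' hl' => ?_
      have hne : l' ≠ l := (Finset.mem_erase.mp hl').1
      rcases lt_or_gt_of_ne hne with hlt | hgt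
      · exact Ideal.mul_mem_left _ _ (ihl l' hlt)
      · have hz : h i l' l = 0 := hhBT i hgt
        rw [hz, map_zero, zero_mul]
        exact P.zero_mem
    have hdiag : C (h i l l) * X (⟨i, l⟩ : MVar m n) ∈ P := by
      have h4 := P.sub_mem h1 hrest
      rwa [← hsplit, add_sub_cancel_left] at h4
    have h5 := Ideal.mul_mem_left P (C (h i l l)⁻¹) hdiag
    rwa [← mul_assoc, ← C_mul, inv_mul_cancel₀ (hhd i l), C_1, one_mul] at h5
  have step2 : ∀ N : ℕ, ∀ l : Fin (n i), l ≤ j → l.val ≤ N →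
      (X (⟨i, l⟩ : MVar m n) : MvPolynomial (MVar m n) K) ∈ P := by
    intro N
    induction N with
    | zero =>
      intro l hlj hl0
      refine key l hlj fun l' hl' => absurd (Fin.lt_iff_val_lt_val.mp hl') (by omega)
    | succ N ih =>
      intro l hlj hlN
      refine key l hlj fun l' hl' => ih l' (le_trans (le_of_lt hl') hlj) ?_
      have := Fin.lt_iff_val_lt_val.mp hl'
      omega
  exact step2 k.val k (le_of_lt hkj) le_rfl

/-- Part (1): a prime generated by a downward closed set of variables is Borel fixed. -/
lemma part1main {P : Ideal (MvPolynomial (MVar m n) K)}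
    (hV : P = Ideal.span (X '' {v : MVar m n | X v ∈ P}))
    (hdc : ∀ (i : Fin m) (j k : Fin (n i)), k < j →
      (X (⟨i, j⟩ : MVar m n) : MvPolynomial (MVar m n) K) ∈ P →
      (X (⟨i, k⟩ : MVar m n) : MvPolynomial (MVar m n) K) ∈ P) :
    IsBorelFixed P := by
  intro g hBT hd
  have hfacts := fun i => matrix_inv_facts (g i) (hBT i) (fun j => hd i j)
  set h : ∀ i : Fin m, Matrix (Fin (n i)) (Fin (n i)) K := fun i => (g i)⁻¹ with hhdef
  have hgh : ∀ i, g i * h i = 1 := fun i => (hfacts i).1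
  have hhBT : ∀ i, (h i).BlockTriangular id := fun i => (hfacts i).2.2.1
  have aux : ∀ (A : ∀ i : Fin m, Matrix (Fin (n i)) (Fin (n i)) K),
      (∀ i, (A i).BlockTriangular id) → ∀ v : MVar m n,
      X v ∈ P → borelAut A (X v) ∈ P := by
    rintro A hABT ⟨i, j⟩ hv
    rw [borelAut_X]
    refine Ideal.sum_mem _ fun k _ => ?_
    rcases lt_trichotomy k j with hlt | heq | hgt
    · exact Ideal.mul_mem_left _ _ (hdc i j k hlt hv)
    · rw [heq]; exact Ideal.mul_mem_left _ _ hv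
    · have hz : A i k j = 0 := hABT i hgt
      rw [hz, map_zero, zero_mul]
      exact P.zero_mem
  apply le_antisymm
  · conv_lhs => rw [hV]
    rw [Ideal.map_span, Ideal.span_le]
    rintro y ⟨x, ⟨v, hv, rfl⟩, rfl⟩
    exact aux g hBT v hv
  · conv_lhs => rw [hV]
    rw [Ideal.span_le]
    rintro y ⟨v, hv, rfl⟩
    have h1 : borelAut h (X v) ∈ P := aux h hhBT v hv
    have h2 := Ideal.mem_map_of_mem (borelAut g) h1
    rwa [borelAut_leftInv hgh] at h2

end Main

/-- Every associated prime `P = I : f` of a Borel fixed monomial ideal `I` is itself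
Borel fixed; in particular it is generated by variables, and if `x_{ij} ∈ P` then
`x_{ik} ∈ P` for all `k < j`. -/
theorem stmt2 {K : Type*} [Field K] [Infinite K] {m : ℕ} {n : Fin m → ℕ}
    (I : Ideal (MvPolynomial (MVar m n) K)) (hmon : IsMonomialIdeal I)
    (hBorel : IsBorelFixed I)
    (P : Ideal (MvPolynomial (MVar m n) K)) (hP : P.IsPrime)
    (f : MvPolynomial (MVar m n) K) (hPf : P = I.colon (Ideal.span {f})) :
    IsBorelFixed P ∧
    (∃ V : Set (MVar m n), P = Ideal.span ((fun v => (X v : MvPolynomial (MVar m n) K)) '' V)) ∧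
    (∀ (i : Fin m) (j k : Fin (n i)), k < j →
      (X (⟨i, j⟩ : MVar m n) : MvPolynomial (MVar m n) K) ∈ P →
      (X (⟨i, k⟩ : MVar m n) : MvPolynomial (MVar m n) K) ∈ P) := by
  obtain ⟨T, hT⟩ := hmon
  have hmon' : ∃ T : Set (MVar m n →₀ ℕ),
      I = Ideal.span ((fun d => (monomial d (1 : K))) '' T) := ⟨T, hT⟩
  have hVP := colon_prime_span_X hmon' hP f hPf
  have h3 := part3main hmon' hBorel hP f hPf
  exact ⟨part1main hVP h3, ⟨{v : MVar m n | X v ∈ P}, hVP⟩, h3⟩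
end

section
/- Let X = (x_{ij}) be an m×n matrix of distinct indeterminates with m ≤ n, and let A = (a_{ij}) be an m×n matrix over K all of whose m×m minors are nonzero. Define the K-algebra map Φ: K[x_{ij}] → K[y_1,...,y_n] by Φ(x_{ij}) = a_{ij} y_j. Then the image under Φ of the ideal of maximal minors I_m(X) equals the ideal generated by all squarefree monomials of degree m in y_1,...,y_n. -/
open MvPolynomial

/-- The maximal minor of the `m×n` generic matrix `X = (x_{ij})` on the columns
`c 0 < c 1 < … < c (m-1)`. -/
noncomputable def genericMinor (K : Type*) [Field K] (m n : ℕ) (c : Fin m → Fin n) :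
    MvPolynomial (Fin m × Fin n) K :=
  Matrix.det (Matrix.of fun i k : Fin m => (X (i, c k) : MvPolynomial (Fin m × Fin n) K))

/-- The ideal `I_m(X)` generated by the maximal minors of the generic `m×n` matrix. -/
noncomputable def maxMinorsIdeal (K : Type*) [Field K] (m n : ℕ) :
    Ideal (MvPolynomial (Fin m × Fin n) K) :=
  Ideal.span {f | ∃ c : Fin m → Fin n, StrictMono c ∧ f = genericMinor K m n c}

/-- The substitution `Φ : K[x_{ij}] → K[y_1,…,y_n]`, `x_{ij} ↦ a_{ij} y_j`. -/
noncomputable def Phi {K : Type*} [Field K] {m n : ℕ} (A : Matrix (Fin m) (Fin n) K) :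
    MvPolynomial (Fin m × Fin n) K →+* MvPolynomial (Fin n) K :=
  (MvPolynomial.aeval (fun p : Fin m × Fin n =>
    MvPolynomial.C (A p.1 p.2) * X p.2)).toRingHom

lemma phi_minor {K : Type*} [Field K] {m n : ℕ} (A : Matrix (Fin m) (Fin n) K)
    (c : Fin m → Fin n) :
    Phi A (genericMinor K m n c) =
      C ((A.submatrix id c).det) * ∏ i, (X (c i) : MvPolynomial (Fin n) K) := by
  rw [genericMinor, RingHom.map_det]
  have h1 : (Matrix.of fun i k : Fin m =>
      (X (i, c k) : MvPolynomial (Fin m × Fin n) K)).map (Phi A)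
      = Matrix.of (fun i k : Fin m =>
          (X (c k) : MvPolynomial (Fin n) K) * ((A.submatrix id c).map (C : K →+* _)) i k) := by
    ext i k
    simp [Phi, Matrix.map, mul_comm]
  rw [RingHom.mapMatrix_apply, h1, Matrix.det_mul_row, ← RingHom.mapMatrix_apply, ← RingHom.map_det, mul_comm]

/-- If all maximal minors of `A` are nonzero, then `Φ(I_m(X))` is the ideal generated
by all squarefree monomials of degree `m` in `y_1,…,y_n`. -/
theorem stmt9 {K : Type*} [Field K] {m n : ℕ} (hmn : m ≤ n)
    (A : Matrix (Fin m) (Fin n) K)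
    (hA : ∀ c : Fin m → Fin n, StrictMono c → (A.submatrix id c).det ≠ 0) :
    (maxMinorsIdeal K m n).map (Phi A) =
      Ideal.span {f | ∃ c : Fin m → Fin n, StrictMono c ∧
        f = ∏ i, (X (c i) : MvPolynomial (Fin n) K)} := by
  rw [maxMinorsIdeal, Ideal.map_span]
  apply le_antisymm
  · rw [Ideal.span_le]
    rintro f ⟨g, ⟨c, hc, rfl⟩, rfl⟩
    rw [phi_minor]
    exact Ideal.mul_mem_left _ _ (Ideal.subset_span ⟨c, hc, rfl⟩)
  · rw [Ideal.span_le]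
    rintro f ⟨c, hc, rfl⟩
    have hmem : Phi A (genericMinor K m n c) ∈
        Ideal.span ((Phi A) '' {f | ∃ c : Fin m → Fin n, StrictMono c ∧
          f = genericMinor K m n c}) :=
      Ideal.subset_span ⟨_, ⟨c, hc, rfl⟩, rfl⟩
    have := Ideal.mul_mem_left _ (C ((A.submatrix id c).det)⁻¹) hmem
    rwa [phi_minor, ← mul_assoc, ← C_mul, inv_mul_cancel₀ (hA c hc), C_1, one_mul] at this
end

section
/- If K is an infinite field, then for every m ≤ n there exists an m×n matrix A with entries in K (indeed in K \ {0}) such that every m×m minor of A is nonzero. -/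
/-- Over an infinite field `K`, for every `m ≤ n` there is an `m×n` matrix with all
entries nonzero, all of whose `m×m` minors are nonzero. -/
theorem stmt10 {K : Type*} [Field K] [Infinite K] {m n : ℕ} (hmn : m ≤ n) :
    ∃ A : Matrix (Fin m) (Fin n) K, (∀ i j, A i j ≠ 0) ∧
      ∀ c : Fin m → Fin n, StrictMono c → (A.submatrix id c).det ≠ 0 := by
  have hinf : Infinite {x : K // x ≠ 0} := by
    have h : ({x : K | x ≠ 0}).Infinite :=
      Set.infinite_of_finite_compl (by simp [Set.compl_setOf])
    exact h.to_subtype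
  let e : Fin n ↪ {x : K // x ≠ 0} := Fin.valEmbedding.trans (Infinite.natEmbedding _)
  let v : Fin n → K := fun j => (e j : K)
  have hv0 : ∀ j, v j ≠ 0 := fun j => (e j).2
  have hvinj : Function.Injective v := fun a b h => e.injective (Subtype.ext h)
  refine ⟨fun i j => v j ^ (i : ℕ), fun i j => pow_ne_zero _ (hv0 j), fun c hc => ?_⟩
  have heq : Matrix.submatrix (fun i j => v j ^ (i : ℕ) : Matrix (Fin m) (Fin n) K) id c =
      (Matrix.vandermonde (v ∘ c)).transpose := by
    ext i j
    simp [Matrix.vandermonde, Matrix.submatrix]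
  rw [heq, Matrix.det_transpose, Matrix.det_vandermonde]
  refine Finset.prod_ne_zero_iff.mpr fun i _ => Finset.prod_ne_zero_iff.mpr fun j hj => ?_
  rw [Finset.mem_Ioi] at hj
  refine sub_ne_zero.mpr fun h => ?_
  have := hc.injective (hvinj h)
  exact absurd this.symm hj.ne
end

section
/- Let I = (x_{1 j_1} x_{2 j_2} ··· x_{m j_m} : j_1 + ... + j_m ≤ n, all j_i ≥ 1) in S = K[x_{ij}]. For b ∈ [n]^m write x_b = x_{1b_1}···x_{mb_m}, and extend the componentwise partial order on exponent vectors b to any total order <. Then for every b with |b| ≤ n, the colon ideal (x_c : x_c < x_b, |c| ≤ n) : x_b equals the prime ideal (x_{ij} : 1 ≤ i ≤ m, 1 ≤ j < b_i). -/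
open MvPolynomial

/-!
Both ideals are monomial ideals, so the equality is checked monomial by monomial. If `x_c < x_b`
then `b ≤ c` fails componentwise, so `c_i < b_i` for some `i`; the variable `x_{i c_i}` divides
`x_c`, hence `x^μ x_b`, but not `x_b`, so it divides `x^μ`. Conversely, lowering `b_i` to
`j < b_i` gives `c = b[i ↦ j] < b` with `|c| ≤ |b|`, and `x_{ij} x_b = x_c x_{i b_i}`.
-/

/-- The squarefree monomial `x_b = x_{1b_1} x_{2b_2} ⋯ x_{mb_m}`. -/
noncomputable def xB {K : Type*} [Field K] {m n : ℕ} (b : Fin m → Fin n) :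
    MvPolynomial (Fin m × Fin n) K :=
  ∏ i, (X (i, b i) : MvPolynomial (Fin m × Fin n) K)

/-- `|b| = b_1 + ⋯ + b_m` in the 1-indexed convention of the paper. -/
def bSize {m n : ℕ} (b : Fin m → Fin n) : ℕ := ∑ i, ((b i : ℕ) + 1)

theorem MvPolynomial.mul_monomial_mem_ideal_span_monomial_image_iff {σ R : Type*}
    [CommSemiring R] {f : MvPolynomial σ R} {e : σ →₀ ℕ} {s : Set (σ →₀ ℕ)} :
    f * monomial e 1 ∈ Ideal.span ((fun d => monomial d (1 : R)) '' s) ↔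
      ∀ μ ∈ f.support, ∃ d ∈ s, d ≤ μ + e := by
  rw [mem_ideal_span_monomial_image]
  refine ⟨fun h μ hμ => h (μ + e) ?_, fun h ξ hξ => ?_⟩
  · rwa [mem_support_iff, coeff_mul_monomial, mul_one, ← mem_support_iff]
  · rw [mem_support_iff, coeff_mul_monomial'] at hξ
    split_ifs at hξ with hle
    · obtain ⟨d, hd, hdle⟩ := h (ξ - e) (mem_support_iff.2 (by simpa using hξ))
      exact ⟨d, hd, by rwa [tsub_add_cancel_of_le hle] at hdle⟩
    · exact absurd rfl hξ

theorem not_le_of_rel_of_subrelation {α : Type*} [PartialOrder α] {r : α → α → Prop}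
    [IsStrictOrder α r] (hext : Subrelation (· < ·) r) {a b : α} (h : r a b) : ¬b ≤ a := by
  intro hba
  rcases hba.eq_or_lt with rfl | hlt
  · exact irrefl _ h
  · exact asymm h (hext hlt)

section Monomials

variable {K : Type*} [Field K] {m n : ℕ}

noncomputable def expB (b : Fin m → Fin n) : Fin m × Fin n →₀ ℕ :=
  ∑ i, Finsupp.single (i, b i) 1

theorem xB_eq_monomial (b : Fin m → Fin n) : xB (K := K) b = monomial (expB b) 1 := by
  rw [expB, monomial_sum_one]
  rfl

theorem expB_apply (b : Fin m → Fin n) (i : Fin m) (j : Fin n) :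
    expB b (i, j) = if b i = j then 1 else 0 := by
  classical
  rw [expB, Finsupp.finsetSum_apply, Finset.sum_eq_single i]
  · simp [Finsupp.single_apply]
  · intro k _ hk
    simp [hk]
  · simp

theorem xB_update_mul (b : Fin m → Fin n) (i : Fin m) (j : Fin n) :
    xB (K := K) (Function.update b i j) * X (i, b i) = X (i, j) * xB b := by
  classical
  have hsplit (c : Fin m → Fin n) :
      xB (K := K) c = X (i, c i) * ∏ k ∈ Finset.univ.erase i, X (k, c k) :=
    (Finset.mul_prod_erase _ (fun k => (X (k, c k) : MvPolynomial _ K)) (Finset.mem_univ i)).symm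
  have hrest : ∏ k ∈ Finset.univ.erase i, (X (k, Function.update b i j k) : MvPolynomial _ K) =
      ∏ k ∈ Finset.univ.erase i, X (k, b k) :=
    Finset.prod_congr rfl fun k hk => by rw [Function.update_of_ne (Finset.ne_of_mem_erase hk)]
  rw [hsplit (Function.update b i j), hsplit b, hrest, Function.update_self]
  ring

theorem bSize_mono {b c : Fin m → Fin n} (h : c ≤ b) : bSize c ≤ bSize b :=
  Finset.sum_le_sum fun i _ => Nat.add_le_add_right (Fin.le_def.1 (h i)) 1

theorem colon_span_xB_le_span_X {C : Set (Fin m → Fin n)} {b : Fin m → Fin n}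
    (hC : ∀ c ∈ C, ∃ i, c i < b i) :
    (Ideal.span (xB (K := K) '' C)).colon (Ideal.span {xB (K := K) b}) ≤
      Ideal.span (X '' {p | p.2 < b p.1}) := by
  intro f hf
  have hgen : xB (K := K) '' C = (fun d => monomial d (1 : K)) '' (expB '' C) := by
    rw [Set.image_image]
    exact Set.image_congr fun c _ => xB_eq_monomial c
  rw [Ideal.mem_colon_span_singleton, hgen, xB_eq_monomial,
    mul_monomial_mem_ideal_span_monomial_image_iff] at hf
  rw [mem_ideal_span_X_image]
  intro μ hμ
  obtain ⟨_, ⟨c, hc, rfl⟩, hle⟩ := hf μ hμ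
  obtain ⟨i, hi⟩ := hC c hc
  refine ⟨(i, c i), hi, fun hμ0 => ?_⟩
  have hcoord := hle (i, c i)
  simp [expB_apply, hi.ne', hμ0] at hcoord

theorem X_mem_colon_span_xB {C : Set (Fin m → Fin n)} {b : Fin m → Fin n} {i : Fin m}
    {j : Fin n} (hC : Function.update b i j ∈ C) :
    X (i, j) ∈ (Ideal.span (xB (K := K) '' C)).colon (Ideal.span {xB (K := K) b}) := by
  rw [Ideal.mem_colon_span_singleton, ← xB_update_mul]
  exact Ideal.mul_mem_right _ _ (Ideal.subset_span ⟨_, hC, rfl⟩)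

end Monomials

/-- For `I = (x_c : |c| ≤ n)` and a total order `lt` refining the componentwise
partial order on exponent vectors, the colon ideal
`(x_c : x_c < x_b, |c| ≤ n) : x_b` equals `(x_{ij} : j < b_i)`. -/
theorem stmt15 {K : Type*} [Field K] {m n : ℕ}
    (lt : (Fin m → Fin n) → (Fin m → Fin n) → Prop)
    (hlin : IsStrictTotalOrder (Fin m → Fin n) lt)
    (hext : ∀ b c : Fin m → Fin n, (∀ i, b i ≤ c i) → b ≠ c → lt b c)
    (b : Fin m → Fin n) (hb : bSize b ≤ n) :
    (Ideal.span {f | ∃ c : Fin m → Fin n, lt c b ∧ bSize c ≤ n ∧ f = xB (K := K) c}).colon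
        (Ideal.span {xB (K := K) b}) =
      Ideal.span {f | ∃ (i : Fin m) (j : Fin n), (j : ℕ) < (b i : ℕ) ∧
        f = (X (i, j) : MvPolynomial (Fin m × Fin n) K)} := by
  have hmono : Subrelation (· < ·) lt := fun h => hext _ _ h.le h.ne
  have hsrc : {f | ∃ c : Fin m → Fin n, lt c b ∧ bSize c ≤ n ∧ f = xB (K := K) c} =
      xB '' {c | lt c b ∧ bSize c ≤ n} := by
    ext; simp [eq_comm, and_assoc]
  have htgt : {f | ∃ (i : Fin m) (j : Fin n), (j : ℕ) < (b i : ℕ) ∧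
      f = (X (i, j) : MvPolynomial (Fin m × Fin n) K)} = X '' {p | p.2 < b p.1} := by
    ext; simp [eq_comm]
  rw [hsrc, htgt]
  refine le_antisymm (colon_span_xB_le_span_X fun c hc => ?_) (Ideal.span_le.2 ?_)
  · have := hlin
    simpa [Pi.le_def] using not_le_of_rel_of_subrelation hmono hc.1
  · rintro _ ⟨⟨i, j⟩, hj, rfl⟩
    have hupd : Function.update b i j < b := update_lt_self_iff.2 hj
    exact X_mem_colon_span_xB ⟨hmono hupd, (bSize_mono hupd.le).trans hb⟩
end

section
/- The K-polynomial of S/I, where I = (x_{1j_1}···x_{mj_m} : j_1+...+j_m ≤ n), equals 1 − y_1···y_m · Σ_{k=0}^{n−m} h_k(1−y_1, ..., 1−y_m), where h_k is the complete homogeneous symmetric polynomial of degree k. -/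
open MvPolynomial

/-- The row multidegree of a monomial exponent `d` on the variables `x_{ij}`,
for the grading `deg x_{ij} = e_i ∈ ℤ^m`. -/
def rowDeg {m n : ℕ} (d : Fin m × Fin n →₀ ℕ) (i : Fin m) : ℕ := ∑ j, d (i, j)

/-- The `K`-span of the monomials of row multidegree `a`. -/
noncomputable def rowHomog (K : Type*) [Field K] (m n : ℕ) (a : Fin m → ℕ) :
    Submodule K (MvPolynomial (Fin m × Fin n) K) :=
  Submodule.span K {f | ∃ d : Fin m × Fin n →₀ ℕ, rowDeg d = a ∧ f = monomial d (1 : K)}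

/-- The degree-`a` graded piece of `S/I` for the row grading. -/
noncomputable def rowQuotPiece {K : Type*} [Field K] {m n : ℕ}
    (I : Ideal (MvPolynomial (Fin m × Fin n) K)) (a : Fin m → ℕ) :
    Submodule K (MvPolynomial (Fin m × Fin n) K ⧸ I) :=
  Submodule.map (Ideal.Quotient.mkₐ K I).toLinearMap (rowHomog K m n a)

/-- The `ℤ^m`-graded Hilbert series of `S/I` for the row grading. -/
noncomputable def rowHS {K : Type*} [Field K] {m n : ℕ}
    (I : Ideal (MvPolynomial (Fin m × Fin n) K)) : MvPowerSeries (Fin m) ℤ :=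
  fun a => (Module.finrank K (rowQuotPiece I (a : Fin m →₀ ℕ) : Submodule K _) : ℤ)

/-- `p` is the `K`-polynomial of `S/I` for the row grading:
`p = ∏_{i=1}^m (1-y_i)^n · HS(S/I, y)`. -/
def IsRowKPolynomial {K : Type*} [Field K] {m n : ℕ}
    (I : Ideal (MvPolynomial (Fin m × Fin n) K)) (p : MvPolynomial (Fin m) ℤ) : Prop :=
  (p : MvPowerSeries (Fin m) ℤ) = (∏ i, (1 - MvPowerSeries.X i) ^ n) * rowHS I

/-- The complete homogeneous symmetric polynomial `h_k(y_1,…,y_m)`: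
the sum of all monomials of total degree `k`. -/
noncomputable def hpoly (m k : ℕ) : MvPolynomial (Fin m) ℤ :=
  ∑ d ∈ Finset.finsuppAntidiag (Finset.univ : Finset (Fin m)) k, monomial d (1 : ℤ)

/-- The ideal `I = (x_{1j_1} x_{2j_2} ⋯ x_{mj_m} : j_1 + ⋯ + j_m ≤ n)` (1-indexed). -/
noncomputable def rowMonIdeal (K : Type*) [Field K] (m n : ℕ) :
    Ideal (MvPolynomial (Fin m × Fin n) K) :=
  Ideal.span {f | ∃ b : Fin m → Fin n, (∑ i, ((b i : ℕ) + 1)) ≤ n ∧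
    f = ∏ i, (X (i, b i) : MvPolynomial (Fin m × Fin n) K)}

/-!
The standard monomials (those outside `I`) form a basis of `S/I`, so `HS(S/I) = HS(S) - HS(I)`
with `HS(I)` counting the monomials of `I`. A monomial lies in `I` exactly when the leading
(first nonzero) columns `c_i` of its rows satisfy `∑ (c_i + 1) ≤ n`, and these `c_i` are
determined by the monomial. The monomials with prescribed leading columns factor row by row,
row `i` contributing `y_i (1 - y_i)^{c_i - n}`; hence
`∏ (1 - y_i)^n · HS(S/I) = 1 - y_1⋯y_m ∑_c ∏ (1 - y_i)^{c_i}`, and `c ↦ (c_i)` identifies the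
admissible `c` with the exponents of the monomials of `h_0, …, h_{n-m}`.
-/

open Finset

namespace PowerSeries

theorem coeff_prod_subst_X {σ R : Type*} [Fintype σ] [DecidableEq σ] [CommRing R]
    (f : σ → PowerSeries R) (a : σ →₀ ℕ) :
    MvPowerSeries.coeff a (∏ i, (f i).subst (MvPowerSeries.X i : MvPowerSeries σ R)) =
      ∏ i, coeff (a i) (f i) := by
  rw [MvPowerSeries.coeff_prod,
    sum_eq_single (Finsupp.equivFunOnFinite.symm fun i => Finsupp.single i (a i))]
  · simp [coeff_subst_single]
  · intro l hl hne
    rw [mem_finsuppAntidiag] at hl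
    obtain ⟨i, hi⟩ : ∃ i, l i ≠ Finsupp.single i (l i i) := by
      by_contra! h
      refine hne (Finsupp.ext fun i => ?_)
      have : a i = l i i := by
        rw [← hl.1, Finsupp.finsetSum_apply, sum_eq_single i (fun j _ hj => by
          rw [h j, Finsupp.single_eq_of_ne hj.symm]) (by simp)]
      rw [h i, ← this]
      rfl
    exact prod_eq_zero (mem_univ i) (by simp [coeff_subst_single, hi])
  · simp [mem_finsuppAntidiag]

theorem mk_card_finsuppAntidiag {ι R : Type*} [DecidableEq ι] [CommRing R] (s : Finset ι) :
    mk (fun t => (#(s.finsuppAntidiag t) : R)) = (invOneSubPow R #s).val := by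
  rcases Nat.eq_zero_or_pos #s with h | h
  · rw [card_eq_zero.1 h, card_empty, invOneSubPow_zero]
    ext t
    rcases t with _ | t <;> simp
  · rw [invOneSubPow_val_eq_mk_sub_one_add_choose_of_pos _ _ h]
    ext t
    rw [coeff_mk, coeff_mk, card_finsuppAntidiag_nat_eq_choose, Nat.sub_add_comm h,
      Nat.choose_symm_add]

end PowerSeries

section MonomialQuotient

variable {σ : Type*} (K : Type*) [Field K]

theorem finrank_restrictSupport (s : Finset (σ →₀ ℕ)) :
    Module.finrank K (restrictSupport K (s : Set (σ →₀ ℕ))) = #s := by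
  rw [Module.finrank_eq_card_basis (basisRestrictSupport K _)]
  simp

theorem restrictSupport_inf_span_monomial (E s : Set (σ →₀ ℕ)) :
    restrictSupport K s ⊓
        (Ideal.span ((fun e => monomial e (1 : K)) '' E)).restrictScalars K =
      restrictSupport K (s ∩ {d | ∃ e ∈ E, e ≤ d}) := by
  ext p
  simp only [Submodule.mem_inf, Submodule.restrictScalars_mem, mem_restrictSupport_iff,
    mem_ideal_span_monomial_image, Set.subset_inter_iff]
  rfl

theorem finrank_map_mk_restrictSupport (E : Set (σ →₀ ℕ)) (s : Finset (σ →₀ ℕ))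
    [DecidablePred fun d => ∃ e ∈ E, e ≤ d] :
    Module.finrank K ((restrictSupport K (s : Set (σ →₀ ℕ))).map
        (Ideal.Quotient.mkₐ K (Ideal.span ((fun e => monomial e (1 : K)) '' E))).toLinearMap) =
      #{d ∈ s | ¬ ∃ e ∈ E, e ≤ d} := by
  set J := Ideal.span ((fun e => monomial e (1 : K)) '' E)
  set V := restrictSupport K (s : Set (σ →₀ ℕ))
  let f := (Ideal.Quotient.mkₐ K J).toLinearMap ∘ₗ V.subtype
  have hrange : LinearMap.range f = V.map (Ideal.Quotient.mkₐ K J).toLinearMap := by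
    rw [LinearMap.range_comp, Submodule.range_subtype]
  have hker : Module.finrank K (LinearMap.ker f) = #{d ∈ s | ∃ e ∈ E, e ≤ d} := by
    have hmk : LinearMap.ker (Ideal.Quotient.mkₐ K J).toLinearMap = J.restrictScalars K := by
      ext p
      exact Ideal.Quotient.eq_zero_iff_mem
    rw [LinearMap.ker_comp, hmk, ← Submodule.finrank_map_subtype_eq, Submodule.map_comap_subtype,
      restrictSupport_inf_span_monomial, ← finrank_restrictSupport K, coe_filter]
    rfl
  have : FiniteDimensional K V := .of_basis (basisRestrictSupport K _)
  have hrank := LinearMap.finrank_range_add_finrank_ker f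
  rw [hrange, hker, finrank_restrictSupport] at hrank
  have := card_filter_add_card_filter_not (s := s) (fun d => ∃ e ∈ E, e ≤ d)
  omega

end MonomialQuotient

section LeadingIndex

variable {ι : Type*} [LinearOrder ι]

def IsLeadingIndex (c : ι) (w : ι →₀ ℕ) : Prop :=
  w c ≠ 0 ∧ ∀ j < c, w j = 0

instance [Fintype ι] (c : ι) : DecidablePred (IsLeadingIndex c) := fun _ => by
  unfold IsLeadingIndex
  infer_instance

theorem IsLeadingIndex.eq {c c' : ι} {w : ι →₀ ℕ} (h : IsLeadingIndex c w)
    (h' : IsLeadingIndex c' w) : c = c' :=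
  le_antisymm (not_lt.1 fun hlt => h'.1 (h.2 _ hlt)) (not_lt.1 fun hlt => h.1 (h'.2 _ hlt))

theorem exists_isLeadingIndex_le {w : ι →₀ ℕ} {b : ι} (hb : w b ≠ 0) :
    ∃ c ≤ b, IsLeadingIndex c w := by
  have hne : w.support.Nonempty := ⟨b, Finsupp.mem_support_iff.2 hb⟩
  refine ⟨w.support.min' hne, min'_le _ _ (Finsupp.mem_support_iff.2 hb),
    Finsupp.mem_support_iff.1 (min'_mem _ _), fun j hj => ?_⟩
  by_contra h
  exact not_le.2 hj (min'_le _ _ (Finsupp.mem_support_iff.2 h))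

theorem filter_isLeadingIndex_finsuppAntidiag {n : ℕ} (c : Fin n) (t : ℕ) :
    {w ∈ (univ : Finset (Fin n)).finsuppAntidiag t | IsLeadingIndex c w} =
      (Ici c).finsuppAntidiag t \ (Ioi c).finsuppAntidiag t := by
  ext w
  rw [mem_filter, mem_sdiff]
  simp only [mem_finsuppAntidiag', IsLeadingIndex, subset_iff, Finsupp.mem_support_iff, mem_Ici,
    mem_Ioi, mem_univ]
  constructor
  · rintro ⟨⟨hw, -⟩, hc, hlt⟩
    refine ⟨⟨hw, fun j hj => not_lt.1 fun h => hj (hlt j h)⟩, fun h => hc ?_⟩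
    by_contra h'
    exact lt_irrefl c (h.2 h')
  · rintro ⟨⟨hw, hle⟩, hn⟩
    refine ⟨⟨hw, fun _ _ => trivial⟩, fun hc => hn ⟨hw, fun j hj => ?_⟩,
      fun j hj => by_contra fun h => not_le.2 hj (hle h)⟩
    exact lt_of_le_of_ne (hle hj) fun h => hj (h ▸ hc)

end LeadingIndex

section RowSeries

open PowerSeries

noncomputable def rowSeries {ι : Type*} [Fintype ι] [DecidableEq ι] (P : (ι →₀ ℕ) → Prop)
    [DecidablePred P] : PowerSeries ℤ :=
  mk fun t => #{w ∈ (univ : Finset ι).finsuppAntidiag t | P w}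

theorem rowSeries_true {ι : Type*} [Fintype ι] [DecidableEq ι] :
    rowSeries (ι := ι) (fun _ => True) = (invOneSubPow ℤ (Fintype.card ι)).val := by
  rw [rowSeries, ← card_univ, ← mk_card_finsuppAntidiag]
  simp

theorem one_sub_X_pow_mul_rowSeries_isLeadingIndex {n : ℕ} (c : Fin n) :
    (1 - PowerSeries.X) ^ n * rowSeries (IsLeadingIndex c) =
      PowerSeries.X * (1 - PowerSeries.X) ^ (c : ℕ) := by
  have hseries : rowSeries (IsLeadingIndex c) =
      (invOneSubPow ℤ (n - c)).val - (invOneSubPow ℤ (n - 1 - c)).val := by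
    rw [← Fin.card_Ici, ← Fin.card_Ioi, ← mk_card_finsuppAntidiag, ← mk_card_finsuppAntidiag]
    ext t
    rw [rowSeries, map_sub, coeff_mk, coeff_mk, coeff_mk, filter_isLeadingIndex_finsuppAntidiag,
      card_sdiff_of_subset (finsuppAntidiag_mono Ioi_subset_Ici_self t),
      Nat.cast_sub (card_le_card (finsuppAntidiag_mono Ioi_subset_Ici_self t))]
  have h₁ := one_sub_pow_add_mul_invOneSubPow_val_eq_one_sub_pow ℤ c (n - c)
  have h₂ := one_sub_pow_add_mul_invOneSubPow_val_eq_one_sub_pow ℤ (c + 1) (n - 1 - c)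
  rw [Nat.add_sub_cancel' c.is_lt.le] at h₁
  rw [show c + 1 + (n - 1 - c) = n by omega] at h₂
  rw [hseries, mul_sub, h₁, h₂]
  ring

end RowSeries

section Rows

variable {m n : ℕ}

noncomputable def rowDegFinset (m n : ℕ) (a : Fin m → ℕ) : Finset (Fin m × Fin n →₀ ℕ) :=
  {d ∈ univ.finsuppAntidiag (∑ i, a i) | rowDeg d = a}

theorem mem_rowDegFinset {a : Fin m → ℕ} {d : Fin m × Fin n →₀ ℕ} :
    d ∈ rowDegFinset m n a ↔ rowDeg d = a := by
  rw [rowDegFinset, mem_filter, mem_finsuppAntidiag, and_iff_right_iff_imp]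
  rintro rfl
  exact ⟨Fintype.sum_prod_type _, subset_univ _⟩

theorem rowDeg_eq_iff {a : Fin m → ℕ} {d : Fin m × Fin n →₀ ℕ} :
    rowDeg d = a ↔ ∀ i, d.curry i ∈ (univ : Finset (Fin n)).finsuppAntidiag (a i) := by
  simp only [funext_iff, rowDeg, mem_finsuppAntidiag, subset_univ, and_true]
  rfl

theorem card_filter_rowDegFinset (P : Fin m → (Fin n →₀ ℕ) → Prop) [∀ i, DecidablePred (P i)]
    (a : Fin m → ℕ) :
    #{d ∈ rowDegFinset m n a | ∀ i, P i (d.curry i)} =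
      ∏ i, #{w ∈ (univ : Finset (Fin n)).finsuppAntidiag (a i) | P i w} := by
  rw [← Fintype.card_piFinset]
  refine card_nbij' (fun d i => d.curry i) (fun g => (Finsupp.equivFunOnFinite.symm g).uncurry)
    ?_ ?_ (fun d _ => ?_) (fun g _ => ?_)
  · intro d hd
    simp_all [mem_rowDegFinset, rowDeg_eq_iff]
  · intro g hg
    simp_all [mem_rowDegFinset, rowDeg_eq_iff, Finsupp.curry_uncurry]
  · simp [Finsupp.uncurry_curry]
  · simp [Finsupp.curry_uncurry]

theorem coeff_prod_subst_rowSeries (P : Fin m → (Fin n →₀ ℕ) → Prop)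
    [∀ i, DecidablePred (P i)] (a : Fin m →₀ ℕ) :
    MvPowerSeries.coeff a
        (∏ i, (rowSeries (P i)).subst (MvPowerSeries.X i : MvPowerSeries (Fin m) ℤ)) =
      #{d ∈ rowDegFinset m n a | ∀ i, P i (d.curry i)} := by
  rw [PowerSeries.coeff_prod_subst_X, card_filter_rowDegFinset]
  simp [rowSeries]

theorem rowHomog_eq_restrictSupport (K : Type*) [Field K] (a : Fin m → ℕ) :
    rowHomog K m n a = restrictSupport K ↑(rowDegFinset m n a) := by
  rw [rowHomog, restrictSupport_eq_span]
  congr 1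
  ext f
  simp [mem_rowDegFinset, eq_comm]

end Rows

section RowMonIdeal

variable {m n : ℕ}

def rowMonIndex (m n : ℕ) : Finset (Fin m → Fin n) :=
  {b | ∑ i, ((b i : ℕ) + 1) ≤ n}

theorem mem_rowMonIndex {c : Fin m → Fin n} : c ∈ rowMonIndex m n ↔ ∑ i, (c i : ℕ) + m ≤ n := by
  simp [rowMonIndex, sum_add_distrib]

noncomputable def rowMonExp (b : Fin m → Fin n) : Fin m × Fin n →₀ ℕ :=
  ∑ i, Finsupp.single (i, b i) 1

noncomputable def rowMonExps (m n : ℕ) : Set (Fin m × Fin n →₀ ℕ) :=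
  rowMonExp '' (rowMonIndex m n : Set (Fin m → Fin n))

theorem rowMonExp_apply (b : Fin m → Fin n) (p : Fin m × Fin n) :
    rowMonExp b p = if b p.1 = p.2 then 1 else 0 := by
  rw [rowMonExp, Finsupp.finsetSum_apply, sum_eq_single p.1]
  · simp [Finsupp.single_apply, Prod.ext_iff]
  · intro j _ hj
    simp [Prod.ext_iff, hj]
  · simp

theorem rowMonExp_le_iff {b : Fin m → Fin n} {d : Fin m × Fin n →₀ ℕ} :
    rowMonExp b ≤ d ↔ ∀ i, d (i, b i) ≠ 0 := by
  simp only [Finsupp.le_def, rowMonExp_apply, Prod.forall]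
  constructor
  · intro h i
    simpa [Nat.one_le_iff_ne_zero] using h i (b i)
  · intro h i j
    split_ifs with hj
    · exact Nat.one_le_iff_ne_zero.2 (hj ▸ h i)
    · exact Nat.zero_le _

theorem rowMonIdeal_eq_span_monomial (K : Type*) [Field K] :
    rowMonIdeal K m n =
      Ideal.span ((fun e => monomial e (1 : K)) '' (rowMonExps m n)) := by
  rw [rowMonIdeal, rowMonExps, Set.image_image]
  congr 1
  ext f
  simp only [Set.mem_ofPred_eq, Set.mem_image, mem_coe, rowMonIndex, mem_filter, mem_univ,
    true_and, rowMonExp, monomial_sum_one]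
  exact exists_congr fun b => and_congr_right fun _ => eq_comm

/-- Replacing a witness `b` by the leading columns of the rows makes it unique. -/
theorem exists_rowMonExp_le_iff {d : Fin m × Fin n →₀ ℕ} :
    (∃ e ∈ rowMonExps m n, e ≤ d) ↔
      ∃ c ∈ rowMonIndex m n, ∀ i, IsLeadingIndex (c i) (d.curry i) := by
  simp only [rowMonExps, Set.exists_mem_image, mem_coe, rowMonExp_le_iff]
  constructor
  · rintro ⟨b, hb, hd⟩
    choose c hcb hc using fun i => exists_isLeadingIndex_le (w := d.curry i) (hd i)
    refine ⟨c, mem_rowMonIndex.2 (le_trans ?_ (mem_rowMonIndex.1 hb)), hc⟩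
    gcongr with i
    exact hcb i
  · rintro ⟨c, hc, hlead⟩
    exact ⟨c, hc, fun i => (hlead i).1⟩

theorem card_filter_exists_rowMonExp_le (a : Fin m → ℕ)
    [DecidablePred fun d => ∃ e ∈ rowMonExps m n, e ≤ d] :
    #{d ∈ rowDegFinset m n a | ∃ e ∈ rowMonExps m n, e ≤ d} =
      ∑ c ∈ rowMonIndex m n, #{d ∈ rowDegFinset m n a | ∀ i, IsLeadingIndex (c i) (d.curry i)} := by
  rw [← card_biUnion]
  · congr 1
    ext d
    simp only [mem_filter, mem_biUnion, exists_rowMonExp_le_iff]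
    exact ⟨fun ⟨hd, c, hc, h⟩ => ⟨c, hc, hd, h⟩, fun ⟨c, hc, hd, h⟩ => ⟨hd, c, hc, h⟩⟩
  · intro c _ c' _ hne
    refine disjoint_filter.2 fun d _ hc hc' => hne (funext fun i => (hc i).eq (hc' i))

end RowMonIdeal

section HilbertSeries

variable {K : Type*} [Field K] {m n : ℕ}

theorem coeff_rowHS_rowMonIdeal (a : Fin m →₀ ℕ) :
    MvPowerSeries.coeff a (rowHS (rowMonIdeal K m n)) =
      #(rowDegFinset m n a) - ∑ c ∈ rowMonIndex m n,
        (#{d ∈ rowDegFinset m n a | ∀ i, IsLeadingIndex (c i) (d.curry i)} : ℤ) := by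
  classical
  rw [rowMonIdeal_eq_span_monomial, MvPowerSeries.coeff_apply, rowHS, rowQuotPiece,
    rowHomog_eq_restrictSupport, finrank_map_mk_restrictSupport, ← Nat.cast_sum,
    ← card_filter_exists_rowMonExp_le]
  have := card_filter_add_card_filter_not (s := rowDegFinset m n a)
    (fun d => ∃ e ∈ rowMonExps m n, e ≤ d)
  omega

theorem rowHS_rowMonIdeal :
    rowHS (rowMonIdeal K m n) =
      ∏ i, (rowSeries (ι := Fin n) (fun _ => True)).subst
          (MvPowerSeries.X i : MvPowerSeries (Fin m) ℤ) -
        ∑ c ∈ rowMonIndex m n, ∏ i, (rowSeries (IsLeadingIndex (c i))).subst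
          (MvPowerSeries.X i : MvPowerSeries (Fin m) ℤ) := by
  ext a
  rw [coeff_rowHS_rowMonIdeal, map_sub, map_sum, coeff_prod_subst_rowSeries]
  simp_rw [coeff_prod_subst_rowSeries]
  simp

theorem one_sub_X_pow_mul_rowHS_rowMonIdeal :
    (∏ i, (1 - MvPowerSeries.X i) ^ n) * rowHS (rowMonIdeal K m n) =
      1 - (∏ i, MvPowerSeries.X i) *
        ∑ c ∈ rowMonIndex m n,
          ∏ i, (1 - MvPowerSeries.X i : MvPowerSeries (Fin m) ℤ) ^ (c i : ℕ) := by
  let φ (i : Fin m) : PowerSeries ℤ →ₐ[ℤ] MvPowerSeries (Fin m) ℤ :=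
    PowerSeries.substAlgHom (PowerSeries.HasSubst.X i)
  have hφ (i : Fin m) (f : PowerSeries ℤ) : f.subst (MvPowerSeries.X i) = φ i f := by
    rw [PowerSeries.coe_substAlgHom]
  have hX (i : Fin m) : MvPowerSeries.X i = φ i PowerSeries.X :=
    (PowerSeries.substAlgHom_X _).symm
  have hpow (i : Fin m) (k : ℕ) : (1 - MvPowerSeries.X i) ^ k = φ i ((1 - PowerSeries.X) ^ k) := by
    rw [map_pow, map_sub, map_one, hX]
  have htrue (i : Fin m) :
      (1 - MvPowerSeries.X i) ^ n * φ i (rowSeries (ι := Fin n) (fun _ => True)) = 1 := by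
    rw [hpow, ← map_mul, rowSeries_true, Fintype.card_fin,
      ← PowerSeries.invOneSubPow_inv_eq_one_sub_pow, Units.inv_val, map_one]
  have hlead (i : Fin m) (c : Fin n) :
      (1 - MvPowerSeries.X i) ^ n * φ i (rowSeries (IsLeadingIndex c)) =
        MvPowerSeries.X i * (1 - MvPowerSeries.X i) ^ (c : ℕ) := by
    rw [hpow, hpow, hX, ← map_mul, ← map_mul, one_sub_X_pow_mul_rowSeries_isLeadingIndex]
  rw [rowHS_rowMonIdeal, mul_sub, mul_sum, mul_sum]
  simp_rw [← prod_mul_distrib, hφ, htrue, hlead, prod_const_one]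

end HilbertSeries

section CompleteHomogeneous

variable {m n : ℕ}

theorem aeval_hpoly {R : Type*} [CommRing R] [Algebra ℤ R] (u : Fin m → R) (k : ℕ) :
    aeval u (hpoly m k) = ∑ d ∈ (univ : Finset (Fin m)).finsuppAntidiag k, ∏ i, u i ^ d i := by
  simp [hpoly, aeval_monomial, Finsupp.prod_fintype]

theorem sum_rowMonIndex_eq_sum_finsuppAntidiag {R : Type*} [AddCommMonoid R] (hmn : m ≤ n)
    (f : (Fin m →₀ ℕ) → R) :
    ∑ c ∈ rowMonIndex m n, f (Finsupp.equivFunOnFinite.symm fun i => c i) =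
      ∑ k ∈ range (n - m + 1), ∑ d ∈ (univ : Finset (Fin m)).finsuppAntidiag k, f d := by
  have mem_sigma_iff {d : (_ : ℕ) × (Fin m →₀ ℕ)} :
      d ∈ (range (n - m + 1)).sigma (univ.finsuppAntidiag ·) ↔ ∑ i, d.2 i = d.1 ∧ d.1 + m ≤ n := by
    simp only [mem_sigma, mem_range, mem_finsuppAntidiag, subset_univ, and_true]
    exact ⟨fun ⟨h₁, h₂⟩ => ⟨h₂, by omega⟩, fun ⟨h₁, h₂⟩ => ⟨by omega, h₁⟩⟩
  rw [sum_sigma']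
  refine sum_bij' (fun c _ => ⟨∑ i, (c i : ℕ), Finsupp.equivFunOnFinite.symm fun i => c i⟩)
    (fun d hd i => ⟨d.2 i, ?_⟩) ?_ ?_ ?_ ?_ (fun _ _ => rfl)
  · have := single_le_sum (fun j _ => Nat.zero_le (d.2 j)) (mem_univ i)
    have := mem_sigma_iff.1 hd
    have := i.pos
    omega
  · intro c hc
    simpa [mem_sigma_iff] using mem_rowMonIndex.1 hc
  · intro d hd
    rw [mem_rowMonIndex, (mem_sigma_iff.1 hd).1]
    exact (mem_sigma_iff.1 hd).2
  · intro c _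
    rfl
  · intro d hd
    ext
    · exact (mem_sigma_iff.1 hd).1
    · exact heq_of_eq (Finsupp.ext fun _ => rfl)

theorem sum_aeval_hpoly {R : Type*} [CommRing R] [Algebra ℤ R] (hmn : m ≤ n) (u : Fin m → R) :
    ∑ k ∈ range (n - m + 1), aeval u (hpoly m k) = ∑ c ∈ rowMonIndex m n, ∏ i, u i ^ (c i : ℕ) := by
  simp_rw [aeval_hpoly, ← sum_rowMonIndex_eq_sum_finsuppAntidiag hmn]
  rfl

end CompleteHomogeneous

/-- The `K`-polynomial of `S/I` equals
`1 − y_1⋯y_m · Σ_{k=0}^{n−m} h_k(1−y_1,…,1−y_m)`. -/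
theorem stmt16 {K : Type*} [Field K] {m n : ℕ} (hmn : m ≤ n)
    (p : MvPolynomial (Fin m) ℤ) (hp : IsRowKPolynomial (rowMonIdeal K m n) p) :
    p = 1 - (∏ i, MvPolynomial.X i) *
      ∑ k ∈ Finset.range (n - m + 1),
        MvPolynomial.aeval (fun i => 1 - MvPolynomial.X i) (hpoly m k) := by
  apply MvPolynomial.coe_injective
  refine hp.trans ?_
  rw [one_sub_X_pow_mul_rowHS_rowMonIdeal, sum_aeval_hpoly hmn]
  rw [← coeToMvPowerSeries.ringHom_apply]
  simp only [map_sub, map_one, map_mul, map_prod, map_sum, map_pow,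
    coeToMvPowerSeries.ringHom_apply, coe_X]
end

section
/- For all m ≥ 1 and t ≥ 0, Σ_{k=0}^{t} h_k(1+y_1, ..., 1+y_m) = Σ_{k=0}^{t} C(m+t, m+k) h_k(y_1, ..., y_m) as polynomials in Z[y_1,...,y_m]. -/
/-!
Compare the coefficients of a monomial `y^e` with `|e| = n`. On the right it is
`C(m + t, m + n)`. On the left, `(1 + y)^d` contributes `∏ i, C(d_i, e_i)`, so the coefficient
is `∑_{|d| ≤ t} ∏ i, C(d_i, e_i)`. Splitting off one variable turns this sum into a convolution
with `j ↦ C(j, e_i)`, and the upper-index Vandermonde identity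
`∑_{i + j = t} C(i, a) C(j + c, b + c) = C(t + c + 1, a + b + c + 1)` shows, by induction on the
number of variables, that it equals `C(t + m, n + m)`.
-/

open MvPolynomial

open Finset

theorem Finset.sum_range_sum_antidiagonal {M : Type*} [AddCommMonoid M] (F : ℕ → ℕ → M)
    (t : ℕ) :
    ∑ k ∈ range (t + 1), ∑ p ∈ antidiagonal k, F p.1 p.2 =
      ∑ p ∈ antidiagonal t, ∑ l ∈ range (p.2 + 1), F p.1 l := by
  induction t with
  | zero => simp
  | succ t ih =>
    rw [sum_range_succ, ih, Nat.sum_antidiagonal_succ', Nat.sum_antidiagonal_succ']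
    simp only [sum_range_succ _ (_ + 1), sum_add_distrib, zero_add, sum_range_one]
    abel

theorem Nat.sum_antidiagonal_choose_mul_choose_add (a b c t : ℕ) :
    ∑ p ∈ antidiagonal t, p.1.choose a * (p.2 + c).choose (b + c) =
      (t + c + 1).choose (a + b + c + 1) := by
  induction t generalizing a with
  | zero =>
    rcases a with _ | a
    · rcases b with _ | b <;> simp [Nat.choose_eq_zero_of_lt]
    · simp [Nat.choose_eq_zero_of_lt]
  | succ t ih =>
    rw [Nat.sum_antidiagonal_succ]
    rcases a with _ | a
    · have h := ih 0
      simp only [Nat.choose_zero_right, one_mul] at h ⊢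
      rw [h, zero_add, add_right_comm t 1 c, Nat.choose_succ_succ (t + c + 1)]
    · simp only [Nat.choose_succ_succ' _ a, add_mul, sum_add_distrib, ih, Nat.choose_zero_succ,
        zero_mul, zero_add]
      rw [add_right_comm t 1 c, Nat.choose_succ_succ' (t + c + 1), add_right_comm a 1 b,
        add_right_comm (a + b) 1 c]

theorem Finset.sum_piAntidiag_cons_prod {ι μ R : Type*} [DecidableEq ι] [AddCancelCommMonoid μ]
    [HasAntidiagonal μ] [DecidableEq μ] [CommSemiring R] {a : ι} {s : Finset ι} (ha : a ∉ s)
    (f : ι → μ → R) (n : μ) :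
    ∑ d ∈ piAntidiag (cons a s ha) n, ∏ i ∈ cons a s ha, f i (d i) =
      ∑ p ∈ antidiagonal n, f a p.1 * ∑ d ∈ piAntidiag s p.2, ∏ i ∈ s, f i (d i) := by
  rw [piAntidiag_cons ha, sum_disjiUnion]
  refine sum_congr rfl fun p _ => ?_
  rw [sum_map, mul_sum]
  refine sum_congr rfl fun d hd => ?_
  have hda : d a = 0 := by_contra fun h => ha ((mem_piAntidiag.1 hd).2 a h)
  rw [prod_cons]
  congr 1
  · simp [hda]
  · refine prod_congr rfl fun i hi => ?_
    simp [ne_of_mem_of_not_mem hi ha]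

theorem Finset.sum_finsuppAntidiag_eq_sum_piAntidiag {ι μ M : Type*} [DecidableEq ι]
    [AddCommMonoid μ] [HasAntidiagonal μ] [DecidableEq μ] [AddCommMonoid M]
    (s : Finset ι) (n : μ) (G : (ι → μ) → M) :
    ∑ d ∈ finsuppAntidiag s n, G d = ∑ f ∈ piAntidiag s n, G f := by
  rw [finsuppAntidiag, sum_map, ← sum_attach (piAntidiag s n)]
  rfl

theorem Finset.sum_range_sum_piAntidiag_prod_choose {ι : Type*} [DecidableEq ι] (s : Finset ι)
    (e : ι → ℕ) (t : ℕ) :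
    ∑ k ∈ range (t + 1), ∑ d ∈ piAntidiag s k, ∏ i ∈ s, (d i).choose (e i) =
      (t + #s).choose (∑ i ∈ s, e i + #s) := by
  induction s using Finset.cons_induction generalizing t with
  | empty => simp [sum_range_succ']
  | cons a s ha ih =>
    simp only [sum_piAntidiag_cons_prod ha (fun i (n : ℕ) => n.choose (e i))]
    rw [sum_range_sum_antidiagonal (fun j l => j.choose (e a) *
      ∑ d ∈ piAntidiag s l, ∏ i ∈ s, (d i).choose (e i))]
    simp only [← mul_sum, ih, card_cons, sum_cons]
    rw [Nat.sum_antidiagonal_choose_mul_choose_add]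
    simp only [add_assoc]

theorem MvPolynomial.coeff_prod_one_add_X_pow {σ R : Type*} [Fintype σ] [CommSemiring R]
    (d : σ → ℕ) (e : σ →₀ ℕ) :
    coeff e (∏ i, (1 + X i : MvPolynomial σ R) ^ d i) = ∏ i, ((d i).choose (e i) : R) := by
  classical
  have binomial (i : σ) : (1 + X i : MvPolynomial σ R) ^ d i =
      ∑ j ∈ range (d i + 1), C ((d i).choose j : R) * X i ^ j := by
    simp [add_comm (1 : MvPolynomial σ R), add_pow, mul_comm]
  have eq_indicator_iff (g : σ → ℕ) : e = Finsupp.indicator univ (fun i _ => g i) ↔ ⇑e = g := by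
    simp [DFunLike.ext_iff, _root_.funext_iff]
  simp only [binomial, prod_univ_sum, prod_mul_distrib, ← map_prod, coeff_sum, coeff_C_mul,
    coeff_prod_X_pow, eq_indicator_iff, mul_ite, mul_one, mul_zero, sum_ite_eq, Fintype.mem_piFinset,
    mem_range, Nat.lt_succ_iff]
  split_ifs with he
  · rfl
  · obtain ⟨i, hi⟩ := not_forall.1 he
    exact (prod_eq_zero (mem_univ i) (by simp [Nat.choose_eq_zero_of_lt (not_le.1 hi)])).symm

theorem coeff_hpoly (m k : ℕ) (e : Fin m →₀ ℕ) :
    coeff e (hpoly m k) = if ∑ i, e i = k then 1 else 0 := by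
  simp [hpoly, coeff_sum, coeff_monomial, sum_ite_eq', mem_finsuppAntidiag]

theorem aeval_one_add_X_hpoly (m k : ℕ) :
    aeval (fun i => 1 + X i) (hpoly m k) =
      ∑ d ∈ finsuppAntidiag univ k, ∏ i, (1 + X i : MvPolynomial (Fin m) ℤ) ^ d i := by
  simp only [hpoly, map_sum, aeval_monomial, map_one, one_mul]
  exact sum_congr rfl fun d _ => Finsupp.prod_fintype _ _ fun _ => pow_zero _

theorem stmt18_general {m : ℕ} (t : ℕ) :
    ∑ k ∈ Finset.range (t + 1),
        MvPolynomial.aeval (fun i => 1 + MvPolynomial.X i) (hpoly m k) =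
      ∑ k ∈ Finset.range (t + 1),
        MvPolynomial.C (((m + t).choose (m + k) : ℤ)) * hpoly m k := by
  ext e
  have lhs : coeff e (∑ k ∈ range (t + 1), aeval (fun i => 1 + X i) (hpoly m k)) =
      ((t + m).choose (∑ i, e i + m) : ℤ) := by
    simp only [coeff_sum, aeval_one_add_X_hpoly, coeff_prod_one_add_X_pow,
      sum_finsuppAntidiag_eq_sum_piAntidiag _ _ fun d : Fin m → ℕ => ∏ i, ((d i).choose (e i) : ℤ)]
    have := sum_range_sum_piAntidiag_prod_choose (univ : Finset (Fin m)) e t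
    rw [card_univ, Fintype.card_fin] at this
    exact_mod_cast this
  have rhs : coeff e (∑ k ∈ range (t + 1), C ((m + t).choose (m + k) : ℤ) * hpoly m k) =
      ((t + m).choose (∑ i, e i + m) : ℤ) := by
    simp only [coeff_sum, coeff_C_mul, coeff_hpoly, mul_ite, mul_one, mul_zero, sum_ite_eq,
      mem_range]
    split_ifs with he
    · rw [add_comm m t, add_comm m]
    · rw [Nat.choose_eq_zero_of_lt (by omega), Nat.cast_zero]
  rw [lhs, rhs]

/-- `Σ_{k=0}^t h_k(1+y_1,…,1+y_m) = Σ_{k=0}^t C(m+t, m+k) h_k(y_1,…,y_m)`. -/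
theorem stmt18 {m : ℕ} (hm : 1 ≤ m) (t : ℕ) :
    ∑ k ∈ Finset.range (t + 1),
        MvPolynomial.aeval (fun i => 1 + MvPolynomial.X i) (hpoly m k) =
      ∑ k ∈ Finset.range (t + 1),
        MvPolynomial.C (((m + t).choose (m + k) : ℤ)) * hpoly m k :=
  stmt18_general t
end
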